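/- (Universality of Q↓) Let Q be a query on a λ-graph G. The propagation Q↓ is a bisimulation if and only if there exists a bisimulation containing Q. -/
import Mathlib


/-- Directions for paths in a λ-graph. -/
inductive Dir : Type where
  | left | body | right
deriving DecidableEq

/-- Labels of nodes of a (pre–)λ-graph. -/
inductive NodeLabel (Node Name : Type) : Type where
  | app (l r : Node)
  | abs (body : Node)
  | fvar (name : Name)
  | bvar (binder : Node)

/-- The four kinds of nodes. -/
inductive NodeKind : Type where
  | app | abs | fvar | bvar
deriving DecidableEq

/-- The kind of a node label. -/
def NodeLabel.kind {Node Name : Type} : NodeLabel Node Name → NodeKind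
  | .app _ _ => .app
  | .abs _ => .abs
  | .fvar _ => .fvar
  | .bvar _ => .bvar

/-- Locally nameless λ-terms. -/
inductive Term (Name : Type) : Type where
  | bvar (i : ℕ)
  | fvar (a : Name)
  | app (t s : Term Name)
  | lam (t : Term Name)

/-- Reflexive–symmetric–transitive closure `R*` of a relation. -/
inductive RstClosure {α : Type _} (R : α → α → Prop) : α → α → Prop where
  | base {a b : α} : R a b → RstClosure R a b
  | refl (a : α) : RstClosure R a a
  | symm {a b : α} : RstClosure R a b → RstClosure R b a
  | trans {a b c : α} : RstClosure R a b → RstClosure R b c → RstClosure R a c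

/-- A pre–λ-graph: every node carries a label; the binder of a bound variable node is an
abstraction node; the name of a free variable node uniquely identifies it. -/
structure PreLamGraph (Node Name : Type) : Type where
  label : Node → NodeLabel Node Name
  binder_abs : ∀ n l, label n = .bvar l → ∃ b, label l = .abs b
  fvar_inj : ∀ n m a, label n = .fvar a → label m = .fvar a → n = m

namespace PreLamGraph

variable {Node Name : Type}

/-- `Path G τ n m`: there is a path from `n` to `m` with trace `τ`
(binding edges are never followed). -/
inductive Path (G : PreLamGraph Node Name) : List Dir → Node → Node → Prop where
  | nil (n : Node) : Path G [] n n
  | abs {τ : List Dir} {n m b : Node} :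
      Path G τ n m → G.label m = .abs b → Path G (.body :: τ) n b
  | appL {τ : List Dir} {n m l r : Node} :
      Path G τ n m → G.label m = .app l r → Path G (.left :: τ) n l
  | appR {τ : List Dir} {n m l r : Node} :
      Path G τ n m → G.label m = .app l r → Path G (.right :: τ) n r

/-- `r` is a root: the only path ending at `r` is the empty path from `r` itself. -/
def Root (G : PreLamGraph Node Name) (r : Node) : Prop :=
  ∀ (τ : List Dir) (n : Node), G.Path τ n r → τ = []

/-- `Crosses G τ n p`: the path from `n` with trace `τ` crosses the node `p`. -/
inductive Crosses (G : PreLamGraph Node Name) : List Dir → Node → Node → Prop where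
  | here {τ : List Dir} {n p : Node} : G.Path τ n p → Crosses G τ n p
  | step {d : Dir} {τ : List Dir} {n p m : Node} :
      Crosses G τ n p → G.Path (d :: τ) n m → Crosses G (d :: τ) n p

/-- `m` dominates `n`: every path from a root to `n` crosses `m`. -/
def Dominates (G : PreLamGraph Node Name) (m n : Node) : Prop :=
  ∀ (r : Node) (τ : List Dir), G.Root r → G.Path τ r n → G.Crosses τ r m

/-- Acyclicity: a path from a node to itself must have empty trace. -/
def Acyclic (G : PreLamGraph Node Name) : Prop :=
  ∀ (n : Node) (τ : List Dir), G.Path τ n n → τ = []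

/-- Every bound variable node is dominated by its binder. -/
def Dominated (G : PreLamGraph Node Name) : Prop :=
  ∀ (n l : Node), G.label n = .bvar l → G.Dominates l n

/-- A query relates only root nodes. -/
def IsQuery (G : PreLamGraph Node Name) (Q : Node → Node → Prop) : Prop :=
  ∀ n m, Q n m → G.Root n ∧ G.Root m

/-- A relation is homogeneous if it only relates nodes of the same kind. -/
def Homogeneous (G : PreLamGraph Node Name) (R : Node → Node → Prop) : Prop :=
  ∀ n m, R n m → (G.label n).kind = (G.label m).kind

/-- Closure under the left propagation rule. -/
def ClosedAppL (G : PreLamGraph Node Name) (R : Node → Node → Prop) : Prop :=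
  ∀ n m n1 n2 m1 m2, G.label n = .app n1 n2 → G.label m = .app m1 m2 → R n m → R n1 m1

/-- Closure under the right propagation rule. -/
def ClosedAppR (G : PreLamGraph Node Name) (R : Node → Node → Prop) : Prop :=
  ∀ n m n1 n2 m1 m2, G.label n = .app n1 n2 → G.label m = .app m1 m2 → R n m → R n2 m2

/-- Closure under the body propagation rule. -/
def ClosedAbs (G : PreLamGraph Node Name) (R : Node → Node → Prop) : Prop :=
  ∀ n m n' m', G.label n = .abs n' → G.label m = .abs m' → R n m → R n' m'

/-- Closure under the scoping rule. -/
def ClosedScope (G : PreLamGraph Node Name) (R : Node → Node → Prop) : Prop :=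
  ∀ n m l l', G.label n = .bvar l → G.label m = .bvar l' → R n m → R l l'

/-- Closure under the three propagation rules. -/
def ClosedProp (G : PreLamGraph Node Name) (R : Node → Node → Prop) : Prop :=
  G.ClosedAppL R ∧ G.ClosedAppR R ∧ G.ClosedAbs R

/-- A blind bisimulation is a homogeneous relation closed under the propagation rules. -/
def BlindBisimulation (G : PreLamGraph Node Name) (R : Node → Node → Prop) : Prop :=
  G.Homogeneous R ∧ G.ClosedProp R

/-- A bisimulation is a homogeneous relation closed under the propagation rules
and the scoping rule. -/
def Bisimulation (G : PreLamGraph Node Name) (R : Node → Node → Prop) : Prop :=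
  G.BlindBisimulation R ∧ G.ClosedScope R

/-- A relation is open if whenever it relates two free variable nodes they are equal. -/
def OpenRel (G : PreLamGraph Node Name) (R : Node → Node → Prop) : Prop :=
  ∀ n m a b, G.label n = .fvar a → G.label m = .fvar b → R n m → n = m

/-- A sharing equivalence is an open bisimulation that is also an equivalence relation. -/
def SharingEquivalence (G : PreLamGraph Node Name) (R : Node → Node → Prop) : Prop :=
  G.OpenRel R ∧ G.Bisimulation R ∧ Equivalence R

/-- A blind sharing equivalence is an equivalence relation that is a blind bisimulation. -/
def BlindSharingEquivalence (G : PreLamGraph Node Name) (R : Node → Node → Prop) : Prop :=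
  Equivalence R ∧ G.BlindBisimulation R

/-- The propagation `R↓`: the smallest relation containing `R` and closed under the
propagation rules. -/
inductive Propagation (G : PreLamGraph Node Name) (R : Node → Node → Prop) :
    Node → Node → Prop where
  | base {n m : Node} : R n m → Propagation G R n m
  | appL {n m n1 n2 m1 m2 : Node} :
      Propagation G R n m → G.label n = .app n1 n2 → G.label m = .app m1 m2 →
      Propagation G R n1 m1
  | appR {n m n1 n2 m1 m2 : Node} :
      Propagation G R n m → G.label n = .app n1 n2 → G.label m = .app m1 m2 →
      Propagation G R n2 m2
  | abs {n m n' m' : Node} :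
      Propagation G R n m → G.label n = .abs n' → G.label m = .abs m' →
      Propagation G R n' m'

/-- The spreading `R⇓`: the smallest equivalence relation containing `R` and closed
under the propagation rules. -/
inductive Spreading (G : PreLamGraph Node Name) (R : Node → Node → Prop) :
    Node → Node → Prop where
  | base {n m : Node} : R n m → Spreading G R n m
  | refl (n : Node) : Spreading G R n n
  | symm {n m : Node} : Spreading G R n m → Spreading G R m n
  | trans {n m p : Node} : Spreading G R n m → Spreading G R m p → Spreading G R n p
  | appL {n m n1 n2 m1 m2 : Node} :
      Spreading G R n m → G.label n = .app n1 n2 → G.label m = .app m1 m2 →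
      Spreading G R n1 m1
  | appR {n m n1 n2 m1 m2 : Node} :
      Spreading G R n m → G.label n = .app n1 n2 → G.label m = .app m1 m2 →
      Spreading G R n2 m2
  | abs {n m n' m' : Node} :
      Spreading G R n m → G.label n = .abs n' → G.label m = .abs m' →
      Spreading G R n' m'

/-- `IndexOf G l n τ k`: the de Bruijn index of the abstraction node `l` along the path
from `n` with trace `τ` (which crosses `l`) is `k`. -/
inductive IndexOf (G : PreLamGraph Node Name) (l n : Node) : List Dir → ℕ → Prop where
  | here {τ : List Dir} : G.Path τ n l → IndexOf G l n τ 0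
  | abs {d : Dir} {τ : List Dir} {m b : Node} {k : ℕ} :
      G.Path (d :: τ) n m → G.label m = .abs b → m ≠ l →
      IndexOf G l n τ k → IndexOf G l n (d :: τ) (k + 1)
  | other {d : Dir} {τ : List Dir} {m : Node} {k : ℕ} :
      G.Path (d :: τ) n m → (∀ b, G.label m ≠ .abs b) →
      IndexOf G l n τ k → IndexOf G l n (d :: τ) k

/-- `Readback G r τ t`: the readback of the endpoint of the access path from `r` with
trace `τ` is the locally nameless term `t`. -/
inductive Readback (G : PreLamGraph Node Name) (r : Node) : List Dir → Term Name → Prop where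
  | bvar {τ : List Dir} {n l : Node} {k : ℕ} :
      G.Path τ r n → G.label n = .bvar l → G.IndexOf l r τ k →
      Readback G r τ (.bvar k)
  | fvar {τ : List Dir} {n : Node} {a : Name} :
      G.Path τ r n → G.label n = .fvar a → Readback G r τ (.fvar a)
  | abs {τ : List Dir} {n b : Node} {t : Term Name} :
      G.Path τ r n → G.label n = .abs b → Readback G r (.body :: τ) t →
      Readback G r τ (.lam t)
  | app {τ : List Dir} {n n1 n2 : Node} {t1 t2 : Term Name} :
      G.Path τ r n → G.label n = .app n1 n2 →
      Readback G r (.left :: τ) t1 → Readback G r (.right :: τ) t2 →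
      Readback G r τ (.app t1 t2)

end PreLamGraph

/-- A λ-graph: a finite, acyclic and dominated pre–λ-graph. -/
structure LamGraph (Node Name : Type) extends PreLamGraph Node Name where
  finite : Finite Node
  acyclic : toPreLamGraph.Acyclic
  dominated : toPreLamGraph.Dominated
namespace PreLamGraph

variable {Node Name : Type}

/-- Paths are deterministic. -/
theorem path_det {G : PreLamGraph Node Name} :
    ∀ {τ : List Dir} {n a b : Node}, G.Path τ n a → G.Path τ n b → a = b := by
  intro τ n a b h1 h2
  induction h1 generalizing b with
  | nil => cases h2; rfl
  | abs hp hl ih =>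
    cases h2 with
    | abs hp' hl' =>
      have := ih hp'
      subst this
      rw [hl] at hl'; cases hl'; rfl
  | appL hp hl ih =>
    cases h2 with
    | appL hp' hl' =>
      have := ih hp'
      subst this
      rw [hl] at hl'; cases hl'; rfl
  | appR hp hl ih =>
    cases h2 with
    | appR hp' hl' =>
      have := ih hp'
      subst this
      rw [hl] at hl'; cases hl'; rfl

/-- Paths compose (the later trace goes in front). -/
theorem path_trans {G : PreLamGraph Node Name} :
    ∀ {τ₂ τ₁ : List Dir} {x y z : Node},
      G.Path τ₂ y z → G.Path τ₁ x y → G.Path (τ₂ ++ τ₁) x z := by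
  intro τ₂ τ₁ x y z h2 h1
  induction h2 with
  | nil => exact h1
  | abs hp hl ih => exact .abs (ih h1) hl
  | appL hp hl ih => exact .appL (ih h1) hl
  | appR hp hl ih => exact .appR (ih h1) hl

/-- Paths decompose. -/
theorem path_decomp {G : PreLamGraph Node Name} :
    ∀ (ρ : List Dir) {σ : List Dir} {x z : Node}, G.Path (ρ ++ σ) x z →
      ∃ y, G.Path σ x y ∧ G.Path ρ y z := by
  intro ρ
  induction ρ with
  | nil => intro σ x z h; exact ⟨z, h, .nil z⟩
  | cons d ρ ih =>
    intro σ x z h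
    cases h with
    | abs hp hl =>
      obtain ⟨y, h1, h2⟩ := ih hp
      exact ⟨y, h1, .abs h2 hl⟩
    | appL hp hl =>
      obtain ⟨y, h1, h2⟩ := ih hp
      exact ⟨y, h1, .appL h2 hl⟩
    | appR hp hl =>
      obtain ⟨y, h1, h2⟩ := ih hp
      exact ⟨y, h1, .appR h2 hl⟩

/-- A crossing is a path along a suffix of the trace. -/
theorem crosses_suffix {G : PreLamGraph Node Name} {τ : List Dir} {n p : Node}
    (h : G.Crosses τ n p) : ∃ ρ σ, τ = ρ ++ σ ∧ G.Path σ n p := by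
  induction h with
  | here hp => exact ⟨[], _, rfl, hp⟩
  | @step d τ n p m hc hp ih =>
    obtain ⟨ρ, σ, hτ, hps⟩ := ih
    exact ⟨d :: ρ, σ, by rw [hτ]; rfl, hps⟩

/-- Trace characterization of the propagation, forward direction. -/
theorem propagation_paths {G : PreLamGraph Node Name} {Q : Node → Node → Prop}
    {n m : Node} (h : Propagation G Q n m) :
    ∃ r r' τ, Q r r' ∧ G.Path τ r n ∧ G.Path τ r' m := by
  induction h with
  | base hq => exact ⟨_, _, [], hq, .nil _, .nil _⟩
  | appL h hl hr ih =>
    obtain ⟨r, r', τ, hq, h1, h2⟩ := ih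
    exact ⟨r, r', .left :: τ, hq, .appL h1 hl, .appL h2 hr⟩
  | appR h hl hr ih =>
    obtain ⟨r, r', τ, hq, h1, h2⟩ := ih
    exact ⟨r, r', .right :: τ, hq, .appR h1 hl, .appR h2 hr⟩
  | abs h hl hr ih =>
    obtain ⟨r, r', τ, hq, h1, h2⟩ := ih
    exact ⟨r, r', .body :: τ, hq, .abs h1 hl, .abs h2 hr⟩

/-- Trace characterization of the propagation, backward direction. -/
theorem paths_propagation {G : PreLamGraph Node Name} {Q : Node → Node → Prop}
    {r r' : Node} (hq : Q r r') :
    ∀ {τ : List Dir} {n m : Node}, G.Path τ r n → G.Path τ r' m →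
      Propagation G Q n m := by
  intro τ
  induction τ with
  | nil =>
    intro n m h1 h2
    cases h1; cases h2; exact .base hq
  | cons d τ ih =>
    intro n m h1 h2
    cases h1 with
    | abs hp hl =>
      cases h2 with
      | abs hp' hl' => exact .abs (ih hp hp') hl hl'
    | appL hp hl =>
      cases h2 with
      | appL hp' hl' => exact .appL (ih hp hp') hl hl'
    | appR hp hl =>
      cases h2 with
      | appR hp' hl' => exact .appR (ih hp hp') hl hl'

/-- Any bisimulation absorbs the propagation of a subrelation. -/
theorem propagation_sub {G : PreLamGraph Node Name} {Q B : Node → Node → Prop}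
    (hB : G.Bisimulation B) (hQB : ∀ n m, Q n m → B n m) :
    ∀ {n m}, Propagation G Q n m → B n m := by
  intro n m h
  induction h with
  | base hq => exact hQB _ _ hq
  | appL h hl hr ih => exact hB.1.2.1 _ _ _ _ _ _ hl hr ih
  | appR h hl hr ih => exact hB.1.2.2.1 _ _ _ _ _ _ hl hr ih
  | abs h hl hr ih => exact hB.1.2.2.2 _ _ _ _ hl hr ih

/-- Synchronized walk: a path on the left of a bisimulation pair can be mirrored. -/
theorem sync_left {G : PreLamGraph Node Name} {B : Node → Node → Prop}
    (hB : G.Bisimulation B) :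
    ∀ {σ : List Dir} {x x' y : Node}, B x y → G.Path σ x x' →
      ∃ y', G.Path σ y y' ∧ B x' y' := by
  intro σ
  induction σ with
  | nil =>
    intro x x' y hxy h
    cases h
    exact ⟨y, .nil y, hxy⟩
  | cons d σ ih =>
    intro x x' y hxy h
    cases h with
    | abs hp hl =>
      obtain ⟨y'', hpy, hby⟩ := ih hxy hp
      have hk := hB.1.1 _ _ hby
      rw [hl] at hk
      cases hy'' : G.label y'' with
      | abs b' => exact ⟨b', .abs hpy hy'', hB.1.2.2.2 _ _ _ _ hl hy'' hby⟩
      | app _ _ => rw [hy''] at hk; simp [NodeLabel.kind] at hk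
      | fvar _ => rw [hy''] at hk; simp [NodeLabel.kind] at hk
      | bvar _ => rw [hy''] at hk; simp [NodeLabel.kind] at hk
    | appL hp hl =>
      obtain ⟨y'', hpy, hby⟩ := ih hxy hp
      have hk := hB.1.1 _ _ hby
      rw [hl] at hk
      cases hy'' : G.label y'' with
      | app l' r' => exact ⟨l', .appL hpy hy'', hB.1.2.1 _ _ _ _ _ _ hl hy'' hby⟩
      | abs _ => rw [hy''] at hk; simp [NodeLabel.kind] at hk
      | fvar _ => rw [hy''] at hk; simp [NodeLabel.kind] at hk
      | bvar _ => rw [hy''] at hk; simp [NodeLabel.kind] at hk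
    | appR hp hl =>
      obtain ⟨y'', hpy, hby⟩ := ih hxy hp
      have hk := hB.1.1 _ _ hby
      rw [hl] at hk
      cases hy'' : G.label y'' with
      | app l' r' => exact ⟨r', .appR hpy hy'', hB.1.2.2.1 _ _ _ _ _ _ hl hy'' hby⟩
      | abs _ => rw [hy''] at hk; simp [NodeLabel.kind] at hk
      | fvar _ => rw [hy''] at hk; simp [NodeLabel.kind] at hk
      | bvar _ => rw [hy''] at hk; simp [NodeLabel.kind] at hk

/-- Synchronized walk, mirrored. -/
theorem sync_right {G : PreLamGraph Node Name} {B : Node → Node → Prop}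
    (hB : G.Bisimulation B) :
    ∀ {σ : List Dir} {x y y' : Node}, B x y → G.Path σ y y' →
      ∃ x', G.Path σ x x' ∧ B x' y' := by
  intro σ
  induction σ with
  | nil =>
    intro x y y' hxy h
    cases h
    exact ⟨x, .nil x, hxy⟩
  | cons d σ ih =>
    intro x y y' hxy h
    cases h with
    | abs hp hl =>
      obtain ⟨x'', hpx, hbx⟩ := ih hxy hp
      have hk := hB.1.1 _ _ hbx
      rw [hl] at hk
      cases hx'' : G.label x'' with
      | abs b' => exact ⟨b', .abs hpx hx'', hB.1.2.2.2 _ _ _ _ hx'' hl hbx⟩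
      | app _ _ => rw [hx''] at hk; simp [NodeLabel.kind] at hk
      | fvar _ => rw [hx''] at hk; simp [NodeLabel.kind] at hk
      | bvar _ => rw [hx''] at hk; simp [NodeLabel.kind] at hk
    | appL hp hl =>
      obtain ⟨x'', hpx, hbx⟩ := ih hxy hp
      have hk := hB.1.1 _ _ hbx
      rw [hl] at hk
      cases hx'' : G.label x'' with
      | app l' r' => exact ⟨l', .appL hpx hx'', hB.1.2.1 _ _ _ _ _ _ hx'' hl hbx⟩
      | abs _ => rw [hx''] at hk; simp [NodeLabel.kind] at hk
      | fvar _ => rw [hx''] at hk; simp [NodeLabel.kind] at hk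
      | bvar _ => rw [hx''] at hk; simp [NodeLabel.kind] at hk
    | appR hp hl =>
      obtain ⟨x'', hpx, hbx⟩ := ih hxy hp
      have hk := hB.1.1 _ _ hbx
      rw [hl] at hk
      cases hx'' : G.label x'' with
      | app l' r' => exact ⟨r', .appR hpx hx'', hB.1.2.2.1 _ _ _ _ _ _ hx'' hl hbx⟩
      | abs _ => rw [hx''] at hk; simp [NodeLabel.kind] at hk
      | fvar _ => rw [hx''] at hk; simp [NodeLabel.kind] at hk
      | bvar _ => rw [hx''] at hk; simp [NodeLabel.kind] at hk

/-- In a finite acyclic pre-λ-graph, trace lengths are bounded. -/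
theorem path_length_lt {G : PreLamGraph Node Name} [Finite Node]
    (hac : G.Acyclic) {σ : List Dir} {x z : Node} (h : G.Path σ x z) :
    σ.length < Nat.card Node := by
  have hex : ∀ k : ℕ, k ≤ σ.length → ∃ y, G.Path (σ.drop k) x y := by
    intro k hk
    have : σ = σ.take k ++ σ.drop k := (List.take_append_drop k σ).symm
    rw [this] at h
    obtain ⟨y, h1, _⟩ := path_decomp (σ.take k) h
    exact ⟨y, h1⟩
  classical
  set f : Fin (σ.length + 1) → Node := fun k =>
    Classical.choose (hex k (Nat.lt_succ_iff.mp k.isLt)) with hf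
  have hfspec : ∀ k : Fin (σ.length + 1), G.Path (σ.drop k) x (f k) := fun k =>
    Classical.choose_spec (hex k (Nat.lt_succ_iff.mp k.isLt))
  have key : ∀ k₁ k₂ : Fin (σ.length + 1), k₁ ≤ k₂ → f k₁ = f k₂ → k₁ = k₂ := by
    intro k₁ k₂ hle heq
    have hd : σ.drop k₁.val = (σ.drop k₁.val).take (k₂.val - k₁.val) ++ σ.drop k₂.val := by
      have : (σ.drop k₁.val).drop (k₂.val - k₁.val) = σ.drop k₂.val := by
        rw [List.drop_drop]
        congr 1
        omega
      conv_lhs => rw [← List.take_append_drop (k₂.val - k₁.val) (σ.drop k₁.val)]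
      rw [this]
    have h1 := hfspec k₁
    rw [hd] at h1
    obtain ⟨y, hy1, hy2⟩ := path_decomp _ h1
    have hy : y = f k₂ := path_det hy1 (hfspec k₂)
    subst hy
    rw [heq] at hy2
    have := hac _ _ hy2
    have hlen := congrArg List.length this
    simp [List.length_take, List.length_drop] at hlen
    have hk2 := Nat.lt_succ_iff.mp k₂.isLt
    exact Fin.ext (by omega)
  have hinj : Function.Injective f := by
    intro k₁ k₂ heq
    rcases le_total k₁ k₂ with hle | hle
    · exact key _ _ hle heq
    · exact (key _ _ hle heq.symm).symm
  have := Nat.card_le_card_of_injective f hinj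
  simpa using this

/-- The growth machine: iterating a trace transfer yields arbitrarily long paths. -/
theorem grow {G : PreLamGraph Node Name} [Finite Node] (hac : G.Acyclic)
    {a c : Node} {ξ : List Dir} (hξ : ξ ≠ []) (hpath : G.Path ξ a c)
    (step : ∀ σ (z : Node), G.Path σ a z → ∃ z', G.Path σ c z') : False := by
  have long : ∀ k : ℕ, ∃ (σ : List Dir) (z : Node), G.Path σ a z ∧ k ≤ σ.length := by
    intro k
    induction k with
    | zero => exact ⟨[], a, .nil a, by simp⟩
    | succ k ih =>
      obtain ⟨σ, z, hp, hk⟩ := ih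
      obtain ⟨z', hz'⟩ := step σ z hp
      refine ⟨σ ++ ξ, z', path_trans hz' hpath, ?_⟩
      have : 1 ≤ ξ.length := by
        cases ξ with
        | nil => exact absurd rfl hξ
        | cons _ _ => simp
      simp only [List.length_append]
      omega
  obtain ⟨σ, z, hp, hk⟩ := long (Nat.card Node)
  exact absurd (path_length_lt hac hp) (by omega)

/-- Splitting suffixes of a common list. -/
theorem suffix_split {α : Type _} {ρ₁ σ₁ ρ₂ σ₂ : List α}
    (h : ρ₁ ++ σ₁ = ρ₂ ++ σ₂) (hlen : σ₁.length ≤ σ₂.length) :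
    ∃ ξ, σ₂ = ξ ++ σ₁ := by
  have hl : ρ₂.length ≤ ρ₁.length := by
    have := congrArg List.length h
    simp [List.length_append] at this
    omega
  refine ⟨ρ₁.drop ρ₂.length, ?_⟩
  have hρ : ρ₁ = ρ₂ ++ ρ₁.drop ρ₂.length := by
    have h1 : (ρ₁ ++ σ₁).take ρ₂.length = ρ₁.take ρ₂.length :=
      List.take_append_of_le_length hl
    have h2 : (ρ₂ ++ σ₂).take ρ₂.length = ρ₂ := by
      simp [List.take_append_of_le_length (le_refl ρ₂.length)]
    rw [h] at h1
    rw [h2] at h1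
    conv_lhs => rw [← List.take_append_drop ρ₂.length ρ₁]
    rw [← h1]
  rw [hρ, List.append_assoc] at h
  exact (List.append_cancel_left h).symm

end PreLamGraph

open PreLamGraph in
/-- Universality of `Q↓`. -/
theorem universality_of_propagation {Node Name : Type} (G : LamGraph Node Name)
    (Q : Node → Node → Prop) (hQ : G.toPreLamGraph.IsQuery Q) :
    G.toPreLamGraph.Bisimulation (Propagation G.toPreLamGraph Q) ↔
      ∃ B : Node → Node → Prop, G.toPreLamGraph.Bisimulation B ∧
        ∀ n m, Q n m → B n m := by
  constructor
  · intro h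
    exact ⟨Propagation G.toPreLamGraph Q, h, fun n m hq => .base hq⟩
  · rintro ⟨B, hB, hQB⟩
    have : Finite Node := G.finite
    have hsub : ∀ {n m}, Propagation G.toPreLamGraph Q n m → B n m :=
      fun h => propagation_sub hB hQB h
    refine ⟨⟨fun n m h => hB.1.1 _ _ (hsub h),
      fun n m n1 n2 m1 m2 hl hr h => .appL h hl hr,
      fun n m n1 n2 m1 m2 hl hr h => .appR h hl hr,
      fun n m n' m' hl hr h => .abs h hl hr⟩, ?_⟩
    intro n m l l' hln hlm h
    obtain ⟨r, r', τ, hq, hpn, hpm⟩ := propagation_paths h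
    obtain ⟨hr, hr'⟩ := hQ _ _ hq
    obtain ⟨ρ₁, σ₁, hτ1, hp1⟩ := crosses_suffix (G.dominated n l hln r τ hr hpn)
    obtain ⟨ρ₂, σ₂, hτ2, hp2⟩ := crosses_suffix (G.dominated m l' hlm r' τ hr' hpm)
    have hBll' : B l l' := hB.2 _ _ _ _ hln hlm (hsub h)
    rcases lt_trichotomy σ₁.length σ₂.length with hlt | heq | hgt
    · obtain ⟨ξ, hξ⟩ := suffix_split (hτ1.symm.trans hτ2) (le_of_lt hlt)
      have hξne : ξ ≠ [] := by
        intro hh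
        rw [hh] at hξ
        simp at hξ
        rw [hξ] at hlt
        omega
      rw [hτ2] at hpn
      obtain ⟨xj, hxj1, _⟩ := path_decomp ρ₂ hpn
      have hBxj : B xj l' := hsub (paths_propagation hq hxj1 hp2)
      rw [hξ] at hxj1
      obtain ⟨y, hy1, hy2⟩ := path_decomp ξ hxj1
      have hyl : y = l := path_det hy1 hp1
      subst hyl
      exact absurd (grow G.acyclic hξne hy2 (fun σ z hz => by
        obtain ⟨y', hy', _⟩ := sync_left hB hBll' hz
        obtain ⟨x', hx', _⟩ := sync_right hB hBxj hy'
        exact ⟨x', hx'⟩)) (fun hf => hf)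
    · have hσ : σ₁ = σ₂ := by
        refine List.append_inj_right (hτ1.symm.trans hτ2) ?_
        have := congrArg List.length (hτ1.symm.trans hτ2)
        simp [List.length_append] at this
        omega
      subst hσ
      exact paths_propagation hq hp1 hp2
    · obtain ⟨ξ, hξ⟩ := suffix_split (hτ2.symm.trans hτ1) (le_of_lt hgt)
      have hξne : ξ ≠ [] := by
        intro hh
        rw [hh] at hξ
        simp at hξ
        rw [hξ] at hgt
        omega
      rw [hτ1] at hpm
      obtain ⟨yj, hyj1, _⟩ := path_decomp ρ₁ hpm
      have hBlyj : B l yj := hsub (paths_propagation hq hp1 hyj1)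
      rw [hξ] at hyj1
      obtain ⟨y, hy1, hy2⟩ := path_decomp ξ hyj1
      have hyl : y = l' := path_det hy1 hp2
      subst hyl
      exact absurd (grow G.acyclic hξne hy2 (fun σ z hz => by
        obtain ⟨x', hx', _⟩ := sync_right hB hBll' hz
        obtain ⟨y', hy', _⟩ := sync_left hB hBlyj hx'
        exact ⟨y', hy'⟩)) (fun hf => hf)
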